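/- arXiv:1807.03055 — 3 statements merged into one kernel-verified Lean document; each statement's English description precedes it below -/
import Mathlib

section
/- Let (λ_j)_{j≥1} be a non-increasing sequence of positive reals, and suppose there exist C ≥ 1, p > 0 such that λ_j ≤ e² exp(-2((j-1)/C)^{1/p}) for all j ≥ 2. Then for every τ with 0 < τ < 1/p, the series ∑_{j=2}^∞ λ_j^{j^{-τ}} converges. -/
open Real Filter Asymptotics

theorem stmt_11 (l : ℕ → ℝ) (hmono : ∀ i j, 1 ≤ i → i ≤ j → l j ≤ l i)
    (hpos : ∀ j, 1 ≤ j → 0 < l j)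
    (C p : ℝ) (hC : 1 ≤ C) (hp : 0 < p)
    (hyp : ∀ j : ℕ, 2 ≤ j →
      l j ≤ Real.exp 2 * Real.exp (-2 * (((j : ℝ) - 1) / C) ^ (1 / p)))
    (τ : ℝ) (hτ : 0 < τ) (hτp : τ < 1 / p) :
    Summable (fun j : ℕ => l (j + 2) ^ (((j : ℝ) + 2) ^ (-τ))) := by
  have hC0 : (0:ℝ) < C := lt_of_lt_of_le one_pos hC
  have hp' : 0 < 1 / p := by positivity
  have hδ : 0 < 1 / p - τ := by linarith
  set δ : ℝ := 1 / p - τ with hδdef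
  -- the exponential upper bound for each term
  set u : ℕ → ℝ := fun j =>
    ((j:ℝ)+2) ^ (-τ) * (2 - 2 * ((((j:ℝ)+2) - 1) / C) ^ (1 / p)) with hu
  have key : ∀ j : ℕ, l (j + 2) ^ (((j : ℝ) + 2) ^ (-τ)) ≤ Real.exp (u j) := by
    intro j
    have hx : (0:ℝ) < (j:ℝ) + 2 := by positivity
    have he : (0:ℝ) < ((j:ℝ)+2) ^ (-τ) := rpow_pos_of_pos hx _
    have hb := hyp (j + 2) (by omega)
    have hcast : ((j + 2 : ℕ) : ℝ) = (j:ℝ) + 2 := by push_cast; ring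
    rw [hcast] at hb
    have hlpos : 0 < l (j + 2) := hpos _ (by omega)
    calc l (j + 2) ^ (((j : ℝ) + 2) ^ (-τ))
        ≤ (Real.exp 2 * Real.exp (-2 * ((((j:ℝ)+2) - 1) / C) ^ (1 / p))) ^ (((j : ℝ) + 2) ^ (-τ)) :=
          Real.rpow_le_rpow hlpos.le hb he.le
      _ = Real.exp (u j) := by
          rw [← Real.exp_add, Real.rpow_def_of_pos (Real.exp_pos _), Real.log_exp, hu]
          ring_nf
  have hnonneg : ∀ j : ℕ, 0 ≤ l (j + 2) ^ (((j : ℝ) + 2) ^ (-τ)) := by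
    intro j
    exact Real.rpow_nonneg (hpos _ (by omega)).le _
  -- eventual bound : u j ≤ -2 * log ((j:ℝ)+2)
  set c : ℝ := (2 * C) ^ (-(1 / p)) with hc
  have hc0 : 0 < c := rpow_pos_of_pos (by linarith) _
  have haux : ∀ᶠ x : ℝ in atTop,
      x ^ (-τ) * (2 - 2 * ((x - 1) / C) ^ (1 / p)) + 2 * Real.log x ≤ 0 := by
    have hlog := (isLittleO_log_rpow_atTop hδ).bound (show (0:ℝ) < c/2 by positivity)
    filter_upwards [hlog, eventually_ge_atTop (2:ℝ),
      (Real.tendsto_log_atTop).eventually_ge_atTop 1] with x hx1 hx2 hx3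
    have hx0 : (0:ℝ) < x := by linarith
    -- x ^ (-τ) ≤ 1
    have hA : x ^ (-τ) ≤ 1 :=
      Real.rpow_le_one_of_one_le_of_nonpos (by linarith) (by linarith)
    -- lower bound for the big term
    have hB : (x / (2*C)) ^ (1/p) ≤ ((x - 1) / C) ^ (1 / p) := by
      apply Real.rpow_le_rpow (by positivity) _ hp'.le
      rw [div_le_div_iff₀ (by linarith) hC0]
      nlinarith
    have hBx : x ^ (-τ) * ((x - 1) / C) ^ (1 / p) ≥ c * x ^ δ := by
      have h1 : (x / (2*C)) ^ (1/p) = x ^ (1/p) * c := by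
        rw [Real.div_rpow hx0.le (by positivity), hc,
          Real.rpow_neg (by positivity), div_eq_mul_inv]
      have h2 : x ^ (-τ) * x ^ (1/p) = x ^ δ := by
        rw [← Real.rpow_add hx0, hδdef]; ring_nf
      calc x ^ (-τ) * ((x - 1) / C) ^ (1 / p)
          ≥ x ^ (-τ) * (x / (2*C)) ^ (1/p) := by
            have := Real.rpow_pos_of_pos hx0 (-τ)
            nlinarith
        _ = c * x ^ δ := by rw [h1, ← mul_assoc, h2]; ring
    -- log bound
    have hlx : Real.log x ≤ (c/2) * x ^ δ := by
      have hd : 0 ≤ x ^ δ := (Real.rpow_pos_of_pos hx0 δ).le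
      have := hx1
      rw [Real.norm_eq_abs, Real.norm_eq_abs, abs_of_nonneg (by linarith : (0:ℝ) ≤ Real.log x),
        abs_of_nonneg hd] at this
      linarith
    have hxd : 2 ≤ c * x ^ δ := by
      have : 2 ≤ 2 * Real.log x := by linarith
      nlinarith
    have hexp : x ^ (-τ) * (2 - 2 * ((x - 1) / C) ^ (1 / p))
        = 2 * x ^ (-τ) - 2 * (x ^ (-τ) * ((x - 1) / C) ^ (1 / p)) := by ring
    rw [hexp]
    nlinarith
  have haux' : ∀ᶠ j : ℕ in atTop, u j + 2 * Real.log ((j:ℝ) + 2) ≤ 0 := by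
    have ht : Tendsto (fun j : ℕ => (j:ℝ) + 2) atTop atTop :=
      tendsto_atTop_add_const_right _ 2 tendsto_natCast_atTop_atTop
    exact ht.eventually haux
  -- summability of the comparison series
  have hg : Summable (fun j : ℕ => ((j:ℝ) + 2) ^ (-(2:ℝ))) := by
    have : Summable (fun n : ℕ => 1 / (n:ℝ) ^ (2:ℝ)) :=
      Real.summable_one_div_nat_rpow.2 one_lt_two
    have h2 := (summable_nat_add_iff 2).2 this
    refine h2.congr fun j => ?_
    rw [Real.rpow_neg (by positivity), one_div]
    push_cast
    ring_nf
  refine summable_of_isBigO_nat hg ?_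
  rw [isBigO_iff]
  refine ⟨1, ?_⟩
  filter_upwards [haux'] with j hj
  have hx : (0:ℝ) < (j:ℝ) + 2 := by positivity
  have h1 : l (j + 2) ^ (((j : ℝ) + 2) ^ (-τ)) ≤ ((j:ℝ) + 2) ^ (-(2:ℝ)) := by
    calc l (j + 2) ^ (((j : ℝ) + 2) ^ (-τ)) ≤ Real.exp (u j) := key j
      _ ≤ Real.exp (-2 * Real.log ((j:ℝ)+2)) := Real.exp_le_exp.2 (by linarith)
      _ = ((j:ℝ) + 2) ^ (-(2:ℝ)) := by
          rw [Real.rpow_def_of_pos hx]; ring_nf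
  rw [Real.norm_eq_abs, Real.norm_eq_abs, abs_of_nonneg (hnonneg j),
    abs_of_nonneg (Real.rpow_pos_of_pos hx _).le, one_mul]
  exact h1
end

section
/- Let M > 0, τ > 0, d ∈ ℕ, and let (λ_j)_{j≥1} be a non-increasing sequence of positive reals such that ∑_{j=1}^∞ (1 + (1/2)·ln(max(1, 1/λ_j)))^{-τ(1+ln d)} ≤ M·d^τ. Then for every n ∈ ℕ, √(min(1,λ_n)) ≤ e·exp(-(n/(M d^τ))^{1/(τ(1+ln d))}). -/
theorem stmt_16 (l : ℕ → ℝ) (hmono : ∀ i j, 1 ≤ i → i ≤ j → l j ≤ l i)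
    (hpos : ∀ j, 1 ≤ j → 0 < l j)
    (M τ : ℝ) (hM : 0 < M) (hτ : 0 < τ) (d : ℕ) (hd : 1 ≤ d)
    (hsum : Summable (fun j : ℕ =>
      (1 + (1 / 2) * Real.log (max 1 (1 / l (j + 1)))) ^ (-(τ * (1 + Real.log d)))))
    (hbnd : ∑' j : ℕ,
      (1 + (1 / 2) * Real.log (max 1 (1 / l (j + 1)))) ^ (-(τ * (1 + Real.log d)))
        ≤ M * (d : ℝ) ^ τ) :
    ∀ n : ℕ, 1 ≤ n →
      Real.sqrt (min 1 (l n)) ≤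
        Real.exp 1 *
          Real.exp (-(((n : ℝ) / (M * (d : ℝ) ^ τ)) ^ (1 / (τ * (1 + Real.log d))))) := by
  intro n hn
  set α := τ * (1 + Real.log d) with hα
  have hd1 : (1:ℝ) ≤ (d:ℝ) := by exact_mod_cast hd
  have hlogd : 0 ≤ Real.log d := Real.log_nonneg hd1
  have hαpos : 0 < α := mul_pos hτ (by linarith)
  set S := M * (d:ℝ) ^ τ with hS
  have hSpos : 0 < S := mul_pos hM (Real.rpow_pos_of_pos (by linarith) τ)
  set b := fun j : ℕ => 1 + (1/2) * Real.log (max 1 (1 / l j)) with hbdef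
  have hb1 : ∀ j, 1 ≤ b j := by
    intro j
    have : 0 ≤ Real.log (max 1 (1/l j)) := Real.log_nonneg (le_max_left _ _)
    simp only [hbdef]; linarith
  have hbn0 : (0:ℝ) < b n := lt_of_lt_of_le one_pos (hb1 n)
  have hanti : ∀ i j, 1 ≤ i → i ≤ j → (b j) ^ (-α) ≤ (b i) ^ (-α) := by
    intro i j hi hij
    have hi' := hpos i hi
    have hj' := hpos j (hi.trans hij)
    have h1 : 1 / l i ≤ 1 / l j := one_div_le_one_div_of_le hj' (hmono i j hi hij)
    have h2 : Real.log (max 1 (1/l i)) ≤ Real.log (max 1 (1/l j)) :=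
      Real.log_le_log (lt_of_lt_of_le one_pos (le_max_left _ _)) (max_le_max le_rfl h1)
    have hbij : b i ≤ b j := by simp only [hbdef]; linarith
    exact Real.rpow_le_rpow_of_nonpos (lt_of_lt_of_le one_pos (hb1 i)) hbij (by linarith)
  have hnn : ∀ j : ℕ, 0 ≤ (b (j+1)) ^ (-α) :=
    fun j => Real.rpow_nonneg (by linarith [hb1 (j+1)]) _
  have key : (n:ℝ) * (b n) ^ (-α) ≤ S := by
    have h1 : ∀ j ∈ Finset.range n, (b n) ^ (-α) ≤ (b (j+1)) ^ (-α) := by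
      intro j hj
      have := Finset.mem_range.mp hj
      exact hanti (j+1) n (by omega) (by omega)
    calc (n:ℝ) * (b n) ^ (-α) = ∑ _j ∈ Finset.range n, (b n) ^ (-α) := by
          rw [Finset.sum_const, Finset.card_range, nsmul_eq_mul]
      _ ≤ ∑ j ∈ Finset.range n, (b (j+1)) ^ (-α) := Finset.sum_le_sum h1
      _ ≤ ∑' j : ℕ, (b (j+1)) ^ (-α) := Summable.sum_le_tsum _ (fun j _ => hnn j) hsum
      _ ≤ S := hbnd
  -- derive (n/S)^(1/α) ≤ b n
  have hbα : 0 < (b n) ^ α := Real.rpow_pos_of_pos hbn0 α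
  have h2 : (n:ℝ) / S ≤ (b n) ^ α := by
    rw [div_le_iff₀ hSpos]
    have : (n:ℝ) * (b n) ^ (-α) * (b n) ^ α ≤ S * (b n) ^ α :=
      mul_le_mul_of_nonneg_right key hbα.le
    rw [mul_assoc, ← Real.rpow_add hbn0, neg_add_cancel, Real.rpow_zero, mul_one] at this
    rwa [mul_comm]
  have h3 : ((n:ℝ) / S) ^ (1/α) ≤ b n := by
    have := Real.rpow_le_rpow (div_nonneg (Nat.cast_nonneg n) hSpos.le) h2
      (one_div_nonneg.mpr hαpos.le)
    rwa [← Real.rpow_mul hbn0.le, mul_one_div_cancel hαpos.ne', Real.rpow_one] at this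
  -- identify min with inverse of max
  have hln := hpos n hn
  have hmin : min 1 (l n) = (max 1 (1 / l n))⁻¹ := by
    rcases le_total (l n) 1 with h | h
    · rw [min_eq_right h, max_eq_right (one_le_one_div hln h), one_div, inv_inv]
    · rw [min_eq_left h, max_eq_left (by rw [div_le_one hln]; exact h), inv_one]
  have hmaxpos : 0 < max 1 (1 / l n) := lt_of_lt_of_le one_pos (le_max_left _ _)
  have hsqrt : Real.sqrt (min 1 (l n)) =
      Real.exp (-(Real.log (max 1 (1 / l n)) / 2)) := by
    rw [hmin, Real.sqrt_inv, Real.exp_neg]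
    congr 1
    rw [← Real.log_sqrt hmaxpos.le, Real.exp_log (Real.sqrt_pos.mpr hmaxpos)]
  rw [hsqrt, ← Real.exp_add, Real.exp_le_exp]
  have hb' : b n = 1 + (1/2) * Real.log (max 1 (1 / l n)) := rfl
  have := h3
  rw [hb'] at this
  linarith
end

section
/- Let c > 0, s > 0, t > 0, d ∈ ℕ, and let (a_j)_{j≥1} be a non-increasing sequence in (0,1] such that ∑_{j=1}^∞ exp(-c·(1 + ln(2·max(1, 1/a_j)))^s) ≤ μ·exp(c·d^t) for some μ > 0. Then for every integer j > μ·exp(c·d^t), a_j ≤ 2·exp(1 - ((ln(j/(μ·exp(c d^t))))/c)^{1/s}). -/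
theorem stmt_17 (a : ℕ → ℝ) (hmono : ∀ i j, 1 ≤ i → i ≤ j → a j ≤ a i)
    (hpos : ∀ j, 1 ≤ j → 0 < a j) (hle : ∀ j, 1 ≤ j → a j ≤ 1)
    (c s t μ : ℝ) (hc : 0 < c) (hs : 0 < s) (ht : 0 < t) (hμ : 0 < μ) (d : ℕ) (hd : 1 ≤ d)
    (hsum : Summable (fun j : ℕ =>
      Real.exp (-c * (1 + Real.log (2 * max 1 (1 / a (j + 1)))) ^ s)))
    (hbnd : ∑' j : ℕ,
      Real.exp (-c * (1 + Real.log (2 * max 1 (1 / a (j + 1)))) ^ s)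
        ≤ μ * Real.exp (c * (d : ℝ) ^ t)) :
    ∀ j : ℕ, μ * Real.exp (c * (d : ℝ) ^ t) < (j : ℝ) →
      a j ≤ 2 * Real.exp (1 -
        (Real.log ((j : ℝ) / (μ * Real.exp (c * (d : ℝ) ^ t))) / c) ^ (1 / s)) := by
  intro j hj
  set M := μ * Real.exp (c * (d : ℝ) ^ t) with hMdef
  have hM0 : 0 < M := by positivity
  have hj0 : (0:ℝ) < (j:ℝ) := lt_trans hM0 hj
  have hj1 : 1 ≤ j := by exact_mod_cast Nat.one_le_cast.mpr (by exact_mod_cast hj0)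
  have haj := hpos j hj1
  set X : ℕ → ℝ := fun i => 1 + Real.log (2 * max 1 (1 / a i)) with hXdef
  have hX1 : ∀ i, 1 ≤ X i := by
    intro i
    have h1 : (1:ℝ) ≤ 2 * max 1 (1 / a i) := by
      have : (1:ℝ) ≤ max 1 (1 / a i) := le_max_left _ _
      nlinarith
    have := Real.log_nonneg h1
    simp only [hXdef]; linarith
  have hXmono : ∀ i k, 1 ≤ i → i ≤ k → X i ≤ X k := by
    intro i k hi hik
    have hai := hpos i hi
    have hak := hpos k (le_trans hi hik)
    have hinv : 1 / a i ≤ 1 / a k :=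
      one_div_le_one_div_of_le hak (hmono i k hi hik)
    have hlog : Real.log (2 * max 1 (1 / a i)) ≤ Real.log (2 * max 1 (1 / a k)) := by
      apply Real.log_le_log (by positivity)
      have : max 1 (1 / a i) ≤ max 1 (1 / a k) := max_le_max le_rfl hinv
      linarith
    simp only [hXdef]; linarith
  -- key bound
  have key : (j:ℝ) * Real.exp (-c * (X j) ^ s) ≤ M := by
    calc (j:ℝ) * Real.exp (-c * (X j) ^ s)
        = ∑ _n ∈ Finset.range j, Real.exp (-c * (X j) ^ s) := by
          rw [Finset.sum_const, Finset.card_range, nsmul_eq_mul]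
      _ ≤ ∑ n ∈ Finset.range j, Real.exp (-c * (X (n + 1)) ^ s) := by
          apply Finset.sum_le_sum
          intro n hn
          apply Real.exp_le_exp.mpr
          have hn' : n + 1 ≤ j := Finset.mem_range.mp hn
          have hXle : X (n + 1) ≤ X j := hXmono (n + 1) j (by omega) hn'
          have h1 : (1:ℝ) ≤ X (n + 1) := hX1 _
          have hr : X (n + 1) ^ s ≤ X j ^ s :=
            Real.rpow_le_rpow (by linarith) hXle hs.le
          nlinarith
      _ ≤ ∑' n : ℕ, Real.exp (-c * (X (n + 1)) ^ s) :=
          Summable.sum_le_tsum _ (fun n _ => (Real.exp_pos _).le) hsum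
      _ ≤ M := hbnd
  have hexp_le : Real.exp (-c * (X j) ^ s) ≤ M / j := by
    rw [le_div_iff₀ hj0]
    linarith [key, mul_comm (Real.exp (-c * (X j) ^ s)) (j:ℝ)]
  have hlogle : -c * (X j) ^ s ≤ Real.log (M / j) :=
    (Real.le_log_iff_exp_le (by positivity)).mpr hexp_le
  have hlogdiv : Real.log ((j:ℝ) / M) = - Real.log (M / (j:ℝ)) := by
    rw [Real.log_div (ne_of_gt hj0) (ne_of_gt hM0),
        Real.log_div (ne_of_gt hM0) (ne_of_gt hj0)]
    ring
  set L : ℝ := Real.log ((j:ℝ) / M) / c with hLdef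
  have hL0 : 0 < L := by
    apply div_pos _ hc
    apply Real.log_pos
    rw [lt_div_iff₀ hM0]; linarith
  have hLle : L ≤ (X j) ^ s := by
    rw [hLdef, div_le_iff₀ hc, mul_comm]
    rw [hlogdiv] at *
    nlinarith [hlogle]
  have hXj1 : (1:ℝ) ≤ X j := hX1 j
  have hrle : L ^ (1 / s) ≤ X j := by
    have h1 : L ^ (1 / s) ≤ ((X j) ^ s) ^ (1 / s) :=
      Real.rpow_le_rpow hL0.le hLle (by positivity)
    have h2 : ((X j) ^ s) ^ (1 / s) = X j := by
      rw [← Real.rpow_mul (by linarith : (0:ℝ) ≤ X j), mul_one_div, div_self hs.ne',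
        Real.rpow_one]
    linarith [h2 ▸ h1]
  have hmax : max 1 (1 / a j) = 1 / a j := by
    apply max_eq_right
    rw [le_div_iff₀ haj]
    linarith [hle j hj1]
  -- conclude
  have hXval : X j = 1 + Real.log 2 - Real.log (a j) := by
    simp only [hXdef, hmax]
    rw [Real.log_mul two_ne_zero (by positivity), one_div, Real.log_inv]
    ring
  have hfinal : Real.log (a j / 2) ≤ 1 - L ^ (1 / s) := by
    rw [Real.log_div (ne_of_gt haj) two_ne_zero]
    linarith [hrle, hXval ▸ hrle]
  have := (Real.log_le_iff_le_exp (by positivity : (0:ℝ) < a j / 2)).mp hfinal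
  calc a j = 2 * (a j / 2) := by ring
    _ ≤ 2 * Real.exp (1 - L ^ (1 / s)) := by linarith
end
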